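/- arXiv:1603.05329 — 2 statements merged into one kernel-verified Lean document; each statement's English description precedes it below -/
import Mathlib

section
/- Suppose q > (np − n + p + pα)/(n − p) with n > p > 1, α ≥ 0, q > 1. Let w solve (φ(w'))' + ((n−1)/t)φ(w') + t^α w^q = 0 on [0, t₀] with w(0) = 1, w'(0) = 0, w > 0 on [0, t₀), and w(t₀) = 0. Then a contradiction follows; i.e., no such t₀ > 0 exists, so the solution w satisfies w(t) > 0 for all t ≥ 0. -/
/-!
Integrating the equation once gives `t ^ (n - 1) φ(w') = -ρ`, `ρ t = ∫₀ᵗ s ^ (n - 1 + α) w ^ q`.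
Because the equation is read through `deriv`, which is `0` wherever `φ(w')` is not
differentiable, this first integral needs an argument: at such points the equation forces
`φ(w') = -t ^ (1 + α) w ^ q / (n - 1)`, a `C¹` function, and elsewhere `(φ(w'))'` is bounded, so
`φ(w')` is locally Lipschitz. Then `t ^ (n - 1) φ(w') + ρ` is absolutely continuous with derivative
`0` almost everywhere, hence constant, and it tends to `0` at `0`.

Thus `w' = -(ρ t ^ (1 - n)) ^ (1 / (p - 1))`, and the Pohozhaev function `P` is differentiable
on `(0, t₀)` with `P' = (n p / (q + 1) - (n - p) + p α / (q + 1)) t ^ (n - 1 + α) w ^ (q + 1) < 0`.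
Since `P → 0` at `0`, this contradicts `P t₀ = (p - 1) t₀ ^ n |w'(t₀)| ^ p > 0`.
-/

open Real Set Filter Topology MeasureTheory
open scoped NNReal

namespace LaneEmdenPohozhaev

noncomputable def phi (p v : ℝ) : ℝ := v * |v| ^ (p - 2)

theorem abs_phi {p : ℝ} (hp : p ≠ 1) (v : ℝ) : |phi p v| = |v| ^ (p - 1) := by
  rcases eq_or_ne v 0 with rfl | hv
  · simp [phi, zero_rpow (sub_ne_zero.2 hp)]
  · rw [phi, abs_mul, abs_of_nonneg (rpow_nonneg (abs_nonneg v) _),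
      show p - 1 = 1 + (p - 2) by ring, rpow_add (abs_pos.2 hv), rpow_one]

theorem continuous_phi {p : ℝ} (hp : 1 < p) : Continuous (phi p) := by
  refine continuous_iff_continuousAt.2 fun v => ?_
  rcases eq_or_ne v 0 with rfl | hv
  · have hlim : Tendsto (fun v : ℝ => |v| ^ (p - 1)) (𝓝 0) (𝓝 0) := by
      simpa [zero_rpow (by linarith : p - 1 ≠ 0)] using
        (continuous_abs.rpow_const (p := p - 1) fun _ => Or.inr (by linarith)).tendsto 0
    rw [ContinuousAt, show phi p 0 = 0 by simp [phi]]
    exact squeeze_zero_norm (fun v => (abs_phi hp.ne' v).le) hlim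
  · exact continuousAt_id.mul
      ((continuousAt_rpow_const _ _ (Or.inl (abs_ne_zero.2 hv))).comp continuous_abs.continuousAt)

theorem eq_neg_rpow_of_phi_eq_neg {p v X : ℝ} (hp : p ≠ 1) (hX : 0 < X) (h : phi p v = -X) :
    v = -X ^ (p - 1)⁻¹ := by
  have hv : v < 0 := by
    by_contra! hv
    have : 0 ≤ phi p v := mul_nonneg hv (by positivity)
    linarith
  have hpow : (-v) ^ (p - 1) = X := by
    rw [← abs_of_neg hv, ← abs_phi hp, h, abs_neg, abs_of_pos hX]
  rw [← hpow, rpow_rpow_inv (by linarith) (sub_ne_zero.2 hp), neg_neg]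

theorem abs_sub_le_of_abs_deriv_le {g : ℝ → ℝ} {s t K : ℝ} (hst : s ≤ t)
    (hgc : ContinuousOn g (Icc s t))
    (hgd : ∀ x ∈ Ioo s t, DifferentiableAt ℝ g x ∧ |deriv g x| ≤ K) :
    |g t - g s| ≤ K * (t - s) := by
  rcases hst.eq_or_lt with rfl | hst
  · simp
  obtain ⟨x, hx, hslope⟩ :=
    exists_deriv_eq_slope g hst hgc fun x hx => (hgd x hx).1.differentiableWithinAt
  rw [eq_div_iff (sub_ne_zero.2 hst.ne')] at hslope
  rw [← hslope, abs_mul, abs_of_pos (sub_pos.2 hst)]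
  exact mul_le_mul_of_nonneg_right (hgd x hx).2 (sub_pos.2 hst).le

/-- Left of the first and right of the last contact point with `h` the bound on `g'` applies;
between them `g` agrees with `h` at both ends. -/
theorem abs_sub_le_of_differentiableAt_of_ne {g h : ℝ → ℝ} {s t : ℝ} {K : ℝ≥0} (hst : s ≤ t)
    (hgc : ContinuousOn g (Icc s t)) (hh : LipschitzOnWith K h (Icc s t))
    (hgd : ∀ x ∈ Ioo s t, g x ≠ h x → DifferentiableAt ℝ g x ∧ |deriv g x| ≤ K) :
    |g t - g s| ≤ K * (t - s) := by
  have off_contact : ∀ u ∈ Icc s t, ∀ v ∈ Icc s t, u ≤ v → (∀ x ∈ Ioo u v, g x ≠ h x) →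
      |g v - g u| ≤ K * (v - u) := fun u hu v hv huv hne =>
    abs_sub_le_of_abs_deriv_le huv (hgc.mono (Icc_subset_Icc hu.1 hv.2)) fun x hx =>
      hgd x ⟨hu.1.trans_lt hx.1, hx.2.trans_le hv.2⟩ (hne x hx)
  set Z := Icc s t ∩ (g - h) ⁻¹' {0}
  have hmemZ : ∀ {x}, x ∈ Z ↔ x ∈ Icc s t ∧ g x = h x := by simp [Z, sub_eq_zero]
  by_cases hZ : Z.Nonempty
  swap
  · exact off_contact s (left_mem_Icc.2 hst) t (right_mem_Icc.2 hst) hst fun x hx hgx =>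
      hZ ⟨x, hmemZ.2 ⟨Ioo_subset_Icc_self hx, hgx⟩⟩
  have hZc : IsClosed Z :=
    (hgc.sub hh.continuousOn).preimage_isClosed_of_isClosed isClosed_Icc isClosed_singleton
  have hZbdd : BddBelow Z ∧ BddAbove Z :=
    ⟨bddBelow_Icc.mono inter_subset_left, bddAbove_Icc.mono inter_subset_left⟩
  have huv : sInf Z ≤ sSup Z := csInf_le hZbdd.1 (hZc.csSup_mem hZ hZbdd.2)
  obtain ⟨hu, hgu⟩ := hmemZ.1 (hZc.csInf_mem hZ hZbdd.1)
  obtain ⟨hv, hgv⟩ := hmemZ.1 (hZc.csSup_mem hZ hZbdd.2)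
  set u := sInf Z
  set v := sSup Z
  have left := off_contact s (left_mem_Icc.2 hst) u hu hu.1 fun x hx hgx =>
    not_lt.2 (csInf_le hZbdd.1 (hmemZ.2 ⟨⟨hx.1.le, hx.2.le.trans hu.2⟩, hgx⟩)) hx.2
  have right := off_contact v hv t (right_mem_Icc.2 hst) hv.2 fun x hx hgx =>
    not_lt.2 (le_csSup hZbdd.2 (hmemZ.2 ⟨⟨hv.1.trans hx.1.le, hx.2.le⟩, hgx⟩)) hx.1
  have middle : |g v - g u| ≤ K * (v - u) := by
    have := hh.dist_le_mul v hv u hu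
    rwa [Real.dist_eq, Real.dist_eq, abs_of_nonneg (sub_nonneg.2 huv), ← hgu, ← hgv] at this
  calc |g t - g s| = |(g t - g v) + (g v - g u) + (g u - g s)| := by ring_nf
    _ ≤ |g t - g v| + |g v - g u| + |g u - g s| := abs_add_three _ _ _
    _ ≤ K * (t - v) + K * (v - u) + K * (u - s) := by gcongr
    _ = K * (t - s) := by ring

theorem lipschitzOnWith_Icc_of_differentiableAt_of_ne {g h : ℝ → ℝ} {a b : ℝ} {K : ℝ≥0}
    (hgc : ContinuousOn g (Icc a b)) (hh : LipschitzOnWith K h (Icc a b))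
    (hgd : ∀ x ∈ Ioo a b, g x ≠ h x → DifferentiableAt ℝ g x ∧ |deriv g x| ≤ K) :
    LipschitzOnWith K g (Icc a b) := by
  have key : ∀ s ∈ Icc a b, ∀ t ∈ Icc a b, s ≤ t → dist (g t) (g s) ≤ K * dist t s := by
    intro s hs t ht hst
    rw [Real.dist_eq, Real.dist_eq, abs_of_nonneg (sub_nonneg.2 hst)]
    exact abs_sub_le_of_differentiableAt_of_ne hst (hgc.mono (Icc_subset_Icc hs.1 ht.2))
      (hh.mono (Icc_subset_Icc hs.1 ht.2)) fun x hx =>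
        hgd x ⟨hs.1.trans_lt hx.1, hx.2.trans_le ht.2⟩
  refine LipschitzOnWith.of_dist_le_mul fun x hx y hy => ?_
  rcases le_total x y with hxy | hyx
  · rw [dist_comm, dist_comm x]
    exact key x hx y hy hxy
  · exact key y hy x hx hyx

section Pohozhaev

variable {p q α n : ℝ} {ρ w : ℝ → ℝ}

/-- With `ρ = t ^ (n - 1) * |w'| ^ (p - 1)` this is the Pohozhaev function
`t ^ n * ((p - 1) * φ(w') * w' + p / (q + 1) * t ^ α * w ^ (q + 1))`
`+ (n - p) * t ^ (n - 1) * φ(w') * w`. -/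
noncomputable def pohozhaev (p q α n : ℝ) (w ρ : ℝ → ℝ) (t : ℝ) : ℝ :=
  (p - 1) * ρ t ^ (p / (p - 1)) * t ^ (n - (n - 1) * (p / (p - 1)))
    + p / (q + 1) * t ^ (n + α) * w t ^ (q + 1) - (n - p) * ρ t * w t

theorem hasDerivAt_pohozhaev {x : ℝ} (hp : p ≠ 1) (hq : q + 1 ≠ 0) (hx : 0 < x)
    (hρ : 0 < ρ x) (hw : 0 < w x) (hρ' : HasDerivAt ρ (x ^ (n - 1 + α) * w x ^ q) x)
    (hw' : HasDerivAt w (-(ρ x ^ (p - 1)⁻¹ * x ^ ((1 - n) * (p - 1)⁻¹))) x) :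
    HasDerivAt (pohozhaev p q α n w ρ)
      (((n * p + p * α) / (q + 1) - (n - p)) * (x ^ (n - 1 + α) * w x ^ (q + 1))) x := by
  refine (((((hρ'.rpow_const (p := p / (p - 1)) (Or.inl hρ.ne')).const_mul (p - 1)).mul
    (hasDerivAt_rpow_const (Or.inl hx.ne'))).add
    (((hasDerivAt_rpow_const (Or.inl hx.ne')).const_mul (p / (q + 1))).mul
      (hw'.rpow_const (p := q + 1) (Or.inl hw.ne')))).sub
    ((hρ'.const_mul (n - p)).mul hw')).congr_deriv ?_
  have hp1 : p - 1 ≠ 0 := sub_ne_zero.2 hp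
  rw [show p / (p - 1) = 1 + (p - 1)⁻¹ by field_simp; ring]
  generalize he : (p - 1)⁻¹ = e at hw' ⊢
  have hep : (p - 1) * e = 1 := he ▸ mul_inv_cancel₀ hp1
  have hq1 : (q + 1) * (q + 1)⁻¹ = 1 := mul_inv_cancel₀ hq
  have hρe : ρ x ^ (1 + e) = ρ x * ρ x ^ e := by rw [rpow_add hρ, rpow_one]
  have hxe : x ^ (n - (n - 1) * (1 + e)) = x * x ^ ((1 - n) * e) := by
    rw [show n - (n - 1) * (1 + e) = 1 + (1 - n) * e by ring, rpow_add hx, rpow_one]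
  have hxα : x ^ (n + α) = x * x ^ (n - 1 + α) := by
    rw [show n + α = 1 + (n - 1 + α) by ring, rpow_add hx, rpow_one]
  have hwq : w x ^ (q + 1) = w x ^ q * w x := by rw [rpow_add hw, rpow_one]
  rw [hρe, hxe, hxα, hwq, add_sub_cancel_left, add_sub_cancel_right,
    show n - (n - 1) * (1 + e) - 1 = (1 - n) * e by ring, show n + α - 1 = n - 1 + α by ring]
  linear_combination
    (ρ x ^ e * x ^ (n - 1 + α) * w x ^ q * x * x ^ ((1 - n) * e)
      - (n - 1) * ρ x * ρ x ^ e * x ^ ((1 - n) * e)) * hep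
    - p * x * x ^ (n - 1 + α) * w x ^ q * ρ x ^ e * x ^ ((1 - n) * e) * hq1

theorem continuousOn_pohozhaev {s : Set ℝ} (hp : 1 < p) (hq : 0 ≤ q + 1) (hs : s ⊆ Ioi 0)
    (hρ : ContinuousOn ρ s) (hw : ContinuousOn w s) :
    ContinuousOn (pohozhaev p q α n w ρ) s := by
  have ha : 0 ≤ p / (p - 1) := div_nonneg (by linarith) (by linarith)
  have hpow : ∀ r : ℝ, ContinuousOn (fun t : ℝ => t ^ r) s := fun r =>
    continuousOn_id.rpow_const fun x hx => Or.inl (hs hx).ne'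
  exact (((continuousOn_const.mul (hρ.rpow_const fun _ _ => Or.inr ha)).mul (hpow _)).add
    ((continuousOn_const.mul (hpow _)).mul (hw.rpow_const fun _ _ => Or.inr hq))).sub
    ((continuousOn_const.mul hρ).mul hw)

theorem pohozhaev_pos {t : ℝ} (hp : 1 < p) (hq : q + 1 ≠ 0) (ht : 0 < t) (hρ : 0 < ρ t)
    (hw : w t = 0) : 0 < pohozhaev p q α n w ρ t := by
  have : 0 < p - 1 := by linarith
  simp only [pohozhaev, hw, zero_rpow hq, mul_zero, add_zero, sub_zero]
  positivity

theorem tendsto_pohozhaev_nhdsGT_zero {C w₀ : ℝ} (hp : 1 < p) (hq : 0 ≤ q + 1) (hn : 0 < n)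
    (hα : 0 ≤ α) (hC : 0 ≤ C) (hρ : Tendsto ρ (𝓝[>] 0) (𝓝 0))
    (hρC : ∀ᶠ x in 𝓝[>] 0, 0 ≤ ρ x ∧ ρ x ≤ C * x ^ (n - 1)) (hw : Tendsto w (𝓝[>] 0) (𝓝 w₀)) :
    Tendsto (pohozhaev p q α n w ρ) (𝓝[>] 0) (𝓝 0) := by
  have hpow : ∀ r : ℝ, 0 < r → Tendsto (fun x : ℝ => x ^ r) (𝓝[>] 0) (𝓝 0) := fun r hr => by
    simpa [zero_rpow hr.ne'] using
      ((continuousAt_rpow_const 0 r (Or.inr hr.le)).tendsto).mono_left nhdsWithin_le_nhds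
  have ha : 0 < p / (p - 1) := div_pos (by linarith) (by linarith)
  have hfirst : Tendsto (fun x => (p - 1) * ρ x ^ (p / (p - 1)) * x ^ (n - (n - 1) * (p / (p - 1))))
      (𝓝[>] 0) (𝓝 0) := by
    refine squeeze_zero' ?_ ?_ (by simpa using (hpow n hn).const_mul ((p - 1) * C ^ (p / (p - 1))))
    · filter_upwards [hρC, self_mem_nhdsWithin] with x hx (hx0 : 0 < x)
      have : 0 ≤ p - 1 := by linarith
      have := rpow_nonneg hx.1 (p / (p - 1))
      positivity
    · filter_upwards [hρC, self_mem_nhdsWithin] with x hx (hx0 : 0 < x)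
      calc (p - 1) * ρ x ^ (p / (p - 1)) * x ^ (n - (n - 1) * (p / (p - 1)))
          ≤ (p - 1) * (C * x ^ (n - 1)) ^ (p / (p - 1)) * x ^ (n - (n - 1) * (p / (p - 1))) := by
            gcongr
            · linarith
            · exact hx.2
        _ = (p - 1) * C ^ (p / (p - 1))
            * (x ^ ((n - 1) * (p / (p - 1))) * x ^ (n - (n - 1) * (p / (p - 1)))) := by
            rw [mul_rpow hC (rpow_nonneg hx0.le _), ← rpow_mul hx0.le]
            ring
        _ = (p - 1) * C ^ (p / (p - 1)) * x ^ n := by rw [← rpow_add hx0, add_sub_cancel]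
  have h := (hfirst.add (((hpow (n + α) (by linarith)).const_mul (p / (q + 1))).mul
    (hw.rpow_const (Or.inr hq)))).sub ((hρ.const_mul (n - p)).mul hw)
  simp only [mul_zero, zero_mul, add_zero, sub_zero] at h
  exact h

end Pohozhaev

section Solution

variable {p q α n t₀ : ℝ} {w : ℝ → ℝ}

def SolvesRadialEq (p q α n t₀ : ℝ) (w : ℝ → ℝ) : Prop :=
  ∀ t ∈ Ioo 0 t₀, deriv (fun s => phi p (deriv w s)) t + ((n - 1) / t) * phi p (deriv w t)
    + t ^ α * w t ^ q = 0

noncomputable def massIntegral (q α n : ℝ) (w : ℝ → ℝ) (t : ℝ) : ℝ :=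
  ∫ s in (0 : ℝ)..t, s ^ (n - 1 + α) * w s ^ q

noncomputable def firstIntegral (p q α n : ℝ) (w : ℝ → ℝ) (t : ℝ) : ℝ :=
  t ^ (n - 1) * phi p (deriv w t) + massIntegral q α n w t

theorem continuousOn_massIntegrand (hn : 1 < n) (hα : 0 ≤ α) (hq : 0 ≤ q)
    (hw : ContinuousOn w (Icc 0 t₀)) :
    ContinuousOn (fun s => s ^ (n - 1 + α) * w s ^ q) (Icc 0 t₀) :=
  (continuousOn_id.rpow_const fun _ _ => Or.inr (by linarith)).mul
    (hw.rpow_const fun _ _ => Or.inr hq)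

theorem hasDerivAt_massIntegral (hn : 1 < n) (hα : 0 ≤ α) (hq : 0 ≤ q)
    (hw : ContinuousOn w (Icc 0 t₀)) {x : ℝ} (hx : x ∈ Ioo 0 t₀) :
    HasDerivAt (massIntegral q α n w) (x ^ (n - 1 + α) * w x ^ q) x := by
  have hf := continuousOn_massIntegrand hn hα hq hw
  exact intervalIntegral.integral_hasDerivAt_right
    ((hf.mono (Icc_subset_Icc le_rfl hx.2.le)).intervalIntegrable_of_Icc hx.1.le)
    ((hf.mono Ioo_subset_Icc_self).stronglyMeasurableAtFilter isOpen_Ioo x hx)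
    (hf.continuousAt (Icc_mem_nhds hx.1 hx.2))

theorem absolutelyContinuousOnInterval_massIntegral (hn : 1 < n) (hα : 0 ≤ α) (hq : 0 ≤ q)
    (ht₀ : 0 ≤ t₀) (hw : ContinuousOn w (Icc 0 t₀)) :
    AbsolutelyContinuousOnInterval (massIntegral q α n w) 0 t₀ :=
  ((continuousOn_massIntegrand hn hα hq hw).intervalIntegrable_of_Icc ht₀)
    |>.absolutelyContinuousOnInterval_intervalIntegral left_mem_uIcc

theorem continuousOn_massIntegral (hn : 1 < n) (hα : 0 ≤ α) (hq : 0 ≤ q) (ht₀ : 0 ≤ t₀)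
    (hw : ContinuousOn w (Icc 0 t₀)) : ContinuousOn (massIntegral q α n w) (Icc 0 t₀) := by
  simpa [uIcc_of_le ht₀] using
    (absolutelyContinuousOnInterval_massIntegral hn hα hq ht₀ hw).continuousOn

theorem massIntegral_pos (hn : 1 < n) (hα : 0 ≤ α) (hq : 0 ≤ q)
    (hw : ContinuousOn w (Icc 0 t₀)) (hpos : ∀ t ∈ Ioo 0 t₀, 0 < w t) {x : ℝ}
    (hx : x ∈ Ioc 0 t₀) : 0 < massIntegral q α n w x :=
  intervalIntegral.intervalIntegral_pos_of_pos_on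
    (((continuousOn_massIntegrand hn hα hq hw).mono
      (Icc_subset_Icc le_rfl hx.2)).intervalIntegrable_of_Icc hx.1.le)
    (fun s hs => mul_pos (rpow_pos_of_pos hs.1 _)
      (rpow_pos_of_pos (hpos s ⟨hs.1, hs.2.trans_le hx.2⟩) _)) hx.1

/-- `deriv` is `0` where `φ (w')` is not differentiable. -/
theorem phi_deriv_eq_of_not_differentiableAt (hn : n ≠ 1) {x : ℝ} (hx : 0 < x)
    (hode : deriv (fun s => phi p (deriv w s)) x + ((n - 1) / x) * phi p (deriv w x)
      + x ^ α * w x ^ q = 0)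
    (hG : ¬ DifferentiableAt ℝ (fun s => phi p (deriv w s)) x) :
    phi p (deriv w x) = -(x ^ (1 + α) * w x ^ q / (n - 1)) := by
  rw [deriv_zero_of_not_differentiableAt hG] at hode
  rw [rpow_add hx, rpow_one]
  have : n - 1 ≠ 0 := sub_ne_zero.2 hn
  field_simp at hode ⊢
  linarith

theorem exists_lipschitzOnWith_phi_deriv (hp : 1 < p) (hn : n ≠ 1)
    (hw : ContDiffOn ℝ 1 w (Icc 0 t₀))
    (hode : SolvesRadialEq p q α n t₀ w)
    (hpos : ∀ t ∈ Ioo 0 t₀, 0 < w t) {c d : ℝ} (hc : 0 < c) (hd : d < t₀) :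
    ∃ K, LipschitzOnWith K (fun s => phi p (deriv w s)) (Icc c d) := by
  have hcd : Icc c d ⊆ Ioo 0 t₀ := fun x hx => ⟨hc.trans_le hx.1, hx.2.trans_lt hd⟩
  have hwcd : ContDiffOn ℝ 1 w (Icc c d) := hw.mono (hcd.trans Ioo_subset_Icc_self)
  have hwne : ∀ x ∈ Icc c d, w x ≠ 0 := fun x hx => (hpos x (hcd hx)).ne'
  have hG : ContinuousOn (fun s => phi p (deriv w s)) (Icc c d) :=
    (continuous_phi hp).comp_continuousOn
      (((hw.mono Ioo_subset_Icc_self).continuousOn_deriv_of_isOpen isOpen_Ioo le_rfl).mono hcd)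
  have hpow : ∀ r : ℝ, ContDiffOn ℝ 1 (fun x : ℝ => x ^ r) (Icc c d) := fun r x hx =>
    (contDiffAt_rpow_const_of_ne (hc.trans_le hx.1).ne').contDiffWithinAt
  obtain ⟨K, hK⟩ : ∃ K, LipschitzOnWith K (fun x => -(x ^ (1 + α) * w x ^ q / (n - 1)))
      (Icc c d) :=
    (((hpow _).mul (hwcd.rpow_const_of_ne hwne)).div_const _).neg.exists_lipschitzOnWith
      one_ne_zero (convex_Icc c d) isCompact_Icc
  obtain ⟨C, hC⟩ := isCompact_Icc.exists_bound_of_continuousOn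
    (((continuousOn_const.div continuousOn_id fun x hx => (hc.trans_le hx.1).ne').mul hG).add
      ((hpow α).continuousOn.mul (hwcd.continuousOn.rpow_const fun x hx => Or.inl (hwne x hx))))
  refine ⟨max K C.toNNReal, lipschitzOnWith_Icc_of_differentiableAt_of_ne hG
    (hK.weaken (le_max_left _ _)) fun x hx hne => ?_⟩
  have hodex := hode x (hcd (Ioo_subset_Icc_self hx))
  refine ⟨?_, ?_⟩
  · by_contra hnd
    exact hne (phi_deriv_eq_of_not_differentiableAt hn (hc.trans hx.1) hodex hnd)
  · rw [eq_neg_of_add_eq_zero_left ((add_assoc _ _ _).symm.trans hodex), abs_neg]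
    exact (hC x (Ioo_subset_Icc_self hx)).trans ((le_coe_toNNReal C).trans (le_max_right _ _))

theorem hasDerivAt_firstIntegral (hn : 1 < n) (hα : 0 ≤ α) (hq : 0 ≤ q)
    (hw : ContinuousOn w (Icc 0 t₀)) {x : ℝ} (hx : x ∈ Ioo 0 t₀)
    (hode : deriv (fun s => phi p (deriv w s)) x + ((n - 1) / x) * phi p (deriv w x)
      + x ^ α * w x ^ q = 0)
    (hG : DifferentiableAt ℝ (fun s => phi p (deriv w s)) x) :
    HasDerivAt (firstIntegral p q α n w) 0 x := by
  refine (((hasDerivAt_rpow_const (p := n - 1) (Or.inl hx.1.ne')).mul hG.hasDerivAt).add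
    (hasDerivAt_massIntegral hn hα hq hw hx)).congr_deriv ?_
  rw [rpow_sub_one hx.1.ne', rpow_add hx.1]
  linear_combination x ^ (n - 1) * hode

theorem firstIntegral_eq_of_le (hp : 1 < p) (hn : 1 < n) (hα : 0 ≤ α) (hq : 0 ≤ q)
    (hw : ContDiffOn ℝ 1 w (Icc 0 t₀))
    (hode : SolvesRadialEq p q α n t₀ w)
    (hpos : ∀ t ∈ Ioo 0 t₀, 0 < w t) {c d : ℝ} (hc : 0 < c) (hcd : c ≤ d) (hd : d < t₀) :
    firstIntegral p q α n w c = firstIntegral p q α n w d := by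
  obtain ⟨K, hK⟩ := exists_lipschitzOnWith_phi_deriv hp hn.ne' hw hode hpos hc hd
  rw [← uIcc_of_le hcd] at hK
  have hG := hK.absolutelyContinuousOnInterval
  have hpow : AbsolutelyContinuousOnInterval (fun x : ℝ => x ^ (n - 1)) c d :=
    ContDiffOn.absolutelyContinuousOnInterval fun x hx =>
      (contDiffAt_rpow_const_of_ne (hc.trans_le (uIcc_of_le hcd ▸ hx).1).ne').contDiffWithinAt
  have hmass := (absolutelyContinuousOnInterval_massIntegral hn hα hq
    (hc.le.trans (hcd.trans hd.le)) hw.continuousOn).mono (by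
      rw [uIcc_of_le hcd, uIcc_of_le (hc.le.trans (hcd.trans hd.le))]
      exact Icc_subset_Icc hc.le hd.le)
  obtain ⟨C, hC⟩ := ((hpow.fun_mul hG).fun_add hmass).const_of_ae_hasDerivAt_zero (by
    filter_upwards [hG.ae_differentiableAt] with x hGx hx
    have hx' : x ∈ Ioo 0 t₀ :=
      ⟨hc.trans_le (uIcc_of_le hcd ▸ hx).1, (uIcc_of_le hcd ▸ hx).2.trans_lt hd⟩
    exact hasDerivAt_firstIntegral hn hα hq hw.continuousOn hx' (hode x hx') (hGx hx))
  exact (hC c left_mem_uIcc).trans (hC d right_mem_uIcc).symm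

theorem exists_abs_phi_deriv_le (hp : 1 < p) (hw : ContDiffOn ℝ 1 w (Icc 0 t₀)) :
    ∃ C, 0 ≤ C ∧ ∀ x ∈ Ioo 0 t₀, |phi p (deriv w x)| ≤ C := by
  obtain ⟨K, hK⟩ := hw.exists_lipschitzOnWith one_ne_zero (convex_Icc 0 t₀) isCompact_Icc
  refine ⟨K ^ (p - 1), by positivity, fun x hx => ?_⟩
  rw [abs_phi hp.ne']
  exact rpow_le_rpow (abs_nonneg _) (norm_deriv_le_of_lipschitzOn (Icc_mem_nhds hx.1 hx.2) hK)
    (by linarith)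

theorem tendsto_massIntegral_nhdsGT_zero (hn : 1 < n) (hα : 0 ≤ α) (hq : 0 ≤ q)
    (ht₀ : 0 < t₀) (hw : ContinuousOn w (Icc 0 t₀)) :
    Tendsto (massIntegral q α n w) (𝓝[>] 0) (𝓝 0) := by
  have h := (continuousOn_massIntegral hn hα hq ht₀.le hw 0 (left_mem_Icc.2 ht₀.le)).tendsto
  rw [massIntegral, intervalIntegral.integral_same] at h
  exact h.mono_left (nhdsWithin_le_of_mem (Icc_mem_nhdsGT ht₀))

theorem tendsto_firstIntegral_nhdsGT_zero (hp : 1 < p) (hn : 1 < n) (hα : 0 ≤ α) (hq : 0 ≤ q)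
    (ht₀ : 0 < t₀) (hw : ContDiffOn ℝ 1 w (Icc 0 t₀)) :
    Tendsto (firstIntegral p q α n w) (𝓝[>] 0) (𝓝 0) := by
  obtain ⟨C, -, hC⟩ := exists_abs_phi_deriv_le hp hw
  have hpow : Tendsto (fun x : ℝ => x ^ (n - 1)) (𝓝[>] 0) (𝓝 0) := by
    simpa [zero_rpow (by linarith : n - 1 ≠ 0)] using
      ((continuousAt_rpow_const 0 (n - 1) (Or.inr (by linarith))).tendsto).mono_left
        nhdsWithin_le_nhds
  have hbdd : IsBoundedUnder (· ≤ ·) (𝓝[>] 0) (fun x => ‖phi p (deriv w x)‖) :=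
    isBoundedUnder_of_eventually_le (a := C) <| by
      rw [← nhdsWithin_Ioo_eq_nhdsGT ht₀]
      filter_upwards [self_mem_nhdsWithin] with x hx using hC x hx
  have h := (hpow.zero_mul_isBoundedUnder_le hbdd).add
    (tendsto_massIntegral_nhdsGT_zero hn hα hq ht₀ hw.continuousOn)
  rw [zero_add] at h
  exact h

theorem firstIntegral_eq_zero (hp : 1 < p) (hn : 1 < n) (hα : 0 ≤ α) (hq : 0 ≤ q)
    (ht₀ : 0 < t₀) (hw : ContDiffOn ℝ 1 w (Icc 0 t₀))
    (hode : SolvesRadialEq p q α n t₀ w)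
    (hpos : ∀ t ∈ Ioo 0 t₀, 0 < w t) {x : ℝ} (hx : x ∈ Ioo 0 t₀) :
    firstIntegral p q α n w x = 0 := by
  refine tendsto_nhds_unique (tendsto_const_nhds.congr' ?_)
    (tendsto_firstIntegral_nhdsGT_zero hp hn hα hq ht₀ hw)
  rw [← nhdsWithin_Ioo_eq_nhdsGT hx.1]
  filter_upwards [self_mem_nhdsWithin] with s hs
  exact (firstIntegral_eq_of_le hp hn hα hq hw hode hpos hs.1 hs.2.le hx.2).symm

theorem deriv_eq_neg_rpow (hp : 1 < p) (hn : 1 < n) (hα : 0 ≤ α) (hq : 0 ≤ q)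
    (ht₀ : 0 < t₀) (hw : ContDiffOn ℝ 1 w (Icc 0 t₀))
    (hode : SolvesRadialEq p q α n t₀ w)
    (hpos : ∀ t ∈ Ioo 0 t₀, 0 < w t) {x : ℝ} (hx : x ∈ Ioo 0 t₀) :
    deriv w x = -(massIntegral q α n w x ^ (p - 1)⁻¹ * x ^ ((1 - n) * (p - 1)⁻¹)) := by
  have hxn : 0 < x ^ (n - 1) := rpow_pos_of_pos hx.1 _
  have hρ := massIntegral_pos hn hα hq hw.continuousOn hpos (Ioo_subset_Ioc_self hx)
  have hphi : phi p (deriv w x) = -(massIntegral q α n w x / x ^ (n - 1)) := by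
    have h := firstIntegral_eq_zero hp hn hα hq ht₀ hw hode hpos hx
    rw [firstIntegral] at h
    field_simp
    linarith
  rw [eq_neg_rpow_of_phi_eq_neg hp.ne' (div_pos hρ hxn) hphi, div_rpow hρ.le hxn.le,
    ← rpow_mul hx.1.le, show (1 - n) * (p - 1)⁻¹ = -((n - 1) * (p - 1)⁻¹) by ring,
    rpow_neg hx.1.le, div_eq_mul_inv]

theorem strictAntiOn_pohozhaev_massIntegral (hp : 1 < p) (hn : p < n) (hα : 0 ≤ α)
    (hq : 0 ≤ q) (hq' : q > (n * p - n + p + p * α) / (n - p)) (ht₀ : 0 < t₀)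
    (hw : ContDiffOn ℝ 1 w (Icc 0 t₀))
    (hode : SolvesRadialEq p q α n t₀ w)
    (hpos : ∀ t ∈ Ioo 0 t₀, 0 < w t) :
    StrictAntiOn (pohozhaev p q α n w (massIntegral q α n w)) (Ioc 0 t₀) := by
  have hn1 : 1 < n := hp.trans hn
  have hcoef : (n * p + p * α) / (q + 1) - (n - p) < 0 := by
    rw [gt_iff_lt, div_lt_iff₀ (by linarith)] at hq'
    rw [sub_neg, div_lt_iff₀ (by linarith)]
    nlinarith
  refine strictAntiOn_of_deriv_neg (convex_Ioc 0 t₀)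
    (continuousOn_pohozhaev hp (by linarith) (fun x hx => hx.1)
      ((continuousOn_massIntegral hn1 hα hq ht₀.le hw.continuousOn).mono Ioc_subset_Icc_self)
      (hw.continuousOn.mono Ioc_subset_Icc_self)) fun x hx => ?_
  rw [interior_Ioc] at hx
  have hw' := ((hw.differentiableOn one_ne_zero x (Ioo_subset_Icc_self hx)).differentiableAt
    (Icc_mem_nhds hx.1 hx.2)).hasDerivAt
  rw [deriv_eq_neg_rpow hp hn1 hα hq ht₀ hw hode hpos hx] at hw'
  rw [(hasDerivAt_pohozhaev hp.ne' (by linarith) hx.1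
    (massIntegral_pos hn1 hα hq hw.continuousOn hpos (Ioo_subset_Ioc_self hx)) (hpos x hx)
    (hasDerivAt_massIntegral hn1 hα hq hw.continuousOn hx) hw').deriv]
  exact mul_neg_of_neg_of_pos hcoef
    (mul_pos (rpow_pos_of_pos hx.1 _) (rpow_pos_of_pos (hpos x hx) _))

theorem tendsto_pohozhaev_massIntegral (hp : 1 < p) (hn : 1 < n) (hα : 0 ≤ α) (hq : 0 ≤ q)
    (ht₀ : 0 < t₀) (hw : ContDiffOn ℝ 1 w (Icc 0 t₀))
    (hode : SolvesRadialEq p q α n t₀ w)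
    (hpos : ∀ t ∈ Ioo 0 t₀, 0 < w t) :
    Tendsto (pohozhaev p q α n w (massIntegral q α n w)) (𝓝[>] 0) (𝓝 0) := by
  obtain ⟨C, hC0, hC⟩ := exists_abs_phi_deriv_le hp hw
  refine tendsto_pohozhaev_nhdsGT_zero hp (by linarith) (by linarith) hα hC0
    (tendsto_massIntegral_nhdsGT_zero hn hα hq ht₀ hw.continuousOn) ?_
    ((hw.continuousOn 0 (left_mem_Icc.2 ht₀.le)).tendsto.mono_left
      (nhdsWithin_le_of_mem (Icc_mem_nhdsGT ht₀)))
  rw [← nhdsWithin_Ioo_eq_nhdsGT ht₀]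
  filter_upwards [self_mem_nhdsWithin] with x hx
  refine ⟨(massIntegral_pos hn hα hq hw.continuousOn hpos (Ioo_subset_Ioc_self hx)).le, ?_⟩
  have h := firstIntegral_eq_zero hp hn hα hq ht₀ hw hode hpos hx
  rw [firstIntegral] at h
  have hφC : -phi p (deriv w x) ≤ C := (neg_le_abs _).trans (hC x hx)
  nlinarith [mul_le_mul_of_nonneg_left hφC (rpow_pos_of_pos hx.1 (n - 1)).le]

end Solution

end LaneEmdenPohozhaev

open LaneEmdenPohozhaev

theorem stmt_4_general (p q α n t₀ : ℝ) (hp : 1 < p) (hq : 1 < q) (hα : 0 ≤ α) (hn : p < n)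
    (hq' : q > (n * p - n + p + p * α) / (n - p)) (ht₀ : 0 < t₀)
    (φ : ℝ → ℝ) (hφ : ∀ v, φ v = v * |v| ^ (p - 2))
    (w : ℝ → ℝ) (hw : ContDiffOn ℝ 1 w (Icc 0 t₀))
    (hode : ∀ t ∈ Ioo 0 t₀,
      deriv (fun s => φ (deriv w s)) t + ((n - 1) / t) * φ (deriv w t)
        + t ^ α * (w t) ^ q = 0)
    (hpos : ∀ t ∈ Ico 0 t₀, 0 < w t) (hzero : w t₀ = 0) :
    False := by
  obtain rfl : φ = phi p := funext hφ
  have hposI : ∀ t ∈ Ioo 0 t₀, 0 < w t := fun t ht => hpos t (Ioo_subset_Ico_self ht)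
  have hn1 : 1 < n := hp.trans hn
  set P := pohozhaev p q α n w (massIntegral q α n w)
  have hanti : StrictAntiOn P (Ioc 0 t₀) :=
    strictAntiOn_pohozhaev_massIntegral hp hn hα (by linarith) hq' ht₀ hw hode hposI
  have hPt₀ : 0 < P t₀ := pohozhaev_pos hp (by linarith) ht₀
    (massIntegral_pos hn1 hα (by linarith) hw.continuousOn hposI ⟨ht₀, le_rfl⟩) hzero
  have hPt₀_le : P t₀ ≤ 0 := by
    refine ge_of_tendsto
      (tendsto_pohozhaev_massIntegral hp hn1 hα (by linarith) ht₀ hw hode hposI) ?_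
    rw [← nhdsWithin_Ioo_eq_nhdsGT ht₀]
    filter_upwards [self_mem_nhdsWithin] with s hs
    exact (hanti ⟨hs.1, hs.2.le⟩ ⟨ht₀, le_rfl⟩ hs.2).le
  linarith

/-- Under `q > (np − n + p + pα)/(n − p)`, a positive solution of
`(φ(w'))' + ((n−1)/t)φ(w') + t^α w^q = 0` with `w(0)=1`, `w'(0)=0` cannot
vanish at some `t₀ > 0`: a contradiction follows. -/
theorem stmt_4 (p q α n t₀ : ℝ) (hp : 1 < p) (hq : 1 < q) (hα : 0 ≤ α) (hn : p < n)
    (hq' : q > (n * p - n + p + p * α) / (n - p)) (ht₀ : 0 < t₀)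
    (φ : ℝ → ℝ) (hφ : ∀ v, φ v = v * |v| ^ (p - 2))
    (w : ℝ → ℝ) (hw : ContDiffOn ℝ 1 w (Icc 0 t₀))
    (hode : ∀ t ∈ Ioo 0 t₀,
      deriv (fun s => φ (deriv w s)) t + ((n - 1) / t) * φ (deriv w t)
        + t ^ α * (w t) ^ q = 0)
    (hw0 : w 0 = 1) (hw0' : deriv w 0 = 0)
    (hpos : ∀ t ∈ Ico 0 t₀, 0 < w t) (hzero : w t₀ = 0) :
    False :=
  stmt_4_general p q α n t₀ hp hq hα hn hq' ht₀ φ hφ w hw hode hpos hzero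
end

section
/- Let w solve (φ(w'))' + ((n−1)/t)φ(w') + t^α w^q = 0 with w(0)=1, w'(0)=0, and suppose w(t) > 0 for all t ≥ 0. Then w is strictly decreasing on (0,∞) and lim_{t→∞} w(t) = 0. -/
/-!
Multiplying the equation by `t ^ (n - 1)` puts it in divergence form
`(t ^ (n - 1) φ(w'))' = -t ^ (n + α - 1) w ^ q < 0`, so the flux `H = t ^ (n - 1) φ(w')` decreases
wherever it is nonnegative. Since `deriv` is `0` where `φ ∘ w'` is not differentiable, all
comparisons are first-crossing arguments, which only need a derivative at points where the
compared function is nonnegative.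

For `n > 1`, `H → 0` at `0⁺`, hence `H < 0`, i.e. `w' < 0`, on `(0, ∞)`. For `n = 1` there is no
positive solution at all: `φ(w')` decreases, and either becomes negative, forcing `w' ≤ -c`, or
stays nonnegative, forcing `w ≥ w 0` and then `φ(w')' ≤ -(w 0) ^ q`. Finally, if `w` decreased to a
limit `L > 0`, comparing `H` with the barrier `-c (t ^ (n + α) - 1)`, `c` small against `L ^ q`,
gives `φ(w') ≤ -c` for large `t`, and again `w` would become negative.
-/

open Real Set Filter Topology

theorem mul_abs_rpow_sub_two_of_nonneg {p v : ℝ} (hp : 1 < p) (hv : 0 ≤ v) :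
    v * |v| ^ (p - 2) = v ^ (p - 1) := by
  rcases hv.eq_or_lt with rfl | hv
  · rw [zero_mul, zero_rpow (by linarith)]
  · rw [abs_of_pos hv, show p - 1 = p - 2 + 1 by ring, rpow_add_one hv.ne', mul_comm]

theorem strictMono_mul_abs_rpow_sub_two {p : ℝ} (hp : 1 < p) :
    StrictMono fun v : ℝ => v * |v| ^ (p - 2) := by
  refine strictMono_of_odd_strictMonoOn_nonneg (fun v => by simp only [abs_neg, neg_mul]) ?_
  refine (strictMonoOn_rpow_Ici_of_exponent_pos (by linarith : 0 < p - 1)).congr fun v hv => ?_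
  exact (mul_abs_rpow_sub_two_of_nonneg hp hv).symm

theorem continuous_mul_abs_rpow_sub_two {p : ℝ} (hp : 1 < p) :
    Continuous fun v : ℝ => v * |v| ^ (p - 2) := by
  have hodd : ∀ v : ℝ, v * |v| ^ (p - 2) = max v 0 ^ (p - 1) - max (-v) 0 ^ (p - 1) := by
    intro v
    rw [← mul_abs_rpow_sub_two_of_nonneg hp (le_max_right v 0),
      ← mul_abs_rpow_sub_two_of_nonneg hp (le_max_right (-v) 0)]
    rcases le_total 0 v with hv | hv
    · simp [max_eq_left hv, max_eq_right (neg_nonpos.2 hv)]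
    · simp [max_eq_right hv, max_eq_left (neg_nonneg.2 hv)]
  simp only [hodd]
  have := continuous_rpow_const (by linarith : (0:ℝ) ≤ p - 1)
  fun_prop

theorem exists_lt_of_hasDerivAt_neg {f : ℝ → ℝ} {f' a t : ℝ} (hf : HasDerivAt f f' t)
    (hf' : f' < 0) (hat : a < t) : ∃ s ∈ Ioo a t, f t < f s := by
  have hslope : ∀ᶠ s in 𝓝[<] t, slope f t s < 0 :=
    hf.hasDerivWithinAt.limsup_slope_le' (lt_irrefl t) hf'
  obtain ⟨s, hs, hst⟩ := (hslope.and (Ioo_mem_nhdsLT hat)).exists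
  refine ⟨s, hst, ?_⟩
  rw [slope_def_field, div_neg_iff] at hs
  rcases hs with h | h
  · linarith [hst.2, h.2]
  · linarith [h.1]

theorem lt_of_hasDerivAt_neg_of_le {f : ℝ → ℝ} {a c : ℝ} (hf : ContinuousOn f (Ici a))
    (ha : f a < c) (hderiv : ∀ t > a, c ≤ f t → ∃ f' < 0, HasDerivAt f f' t) {t : ℝ}
    (ht : a ≤ t) : f t < c := by
  by_contra! hct
  set S := Icc a t ∩ f ⁻¹' Ici c
  have hS : IsClosed S :=
    (hf.mono Icc_subset_Ici_self).preimage_isClosed_of_isClosed isClosed_Icc isClosed_Ici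
  have hbdd : BddBelow S := ⟨a, fun s hs => hs.1.1⟩
  obtain ⟨⟨hau, hut⟩, hcu⟩ := hS.csInf_mem ⟨t, ⟨ht, le_rfl⟩, hct⟩ hbdd
  have hau' : a < sInf S := hau.lt_of_ne fun h => (h ▸ ha).not_ge hcu
  obtain ⟨f', hf'0, hf'⟩ := hderiv _ hau' hcu
  obtain ⟨s, hs, hfs⟩ := exists_lt_of_hasDerivAt_neg hf' hf'0 hau'
  exact (csInf_le hbdd ⟨⟨hs.1.le, hs.2.le.trans hut⟩, hcu.trans hfs.le⟩).not_gt hs.2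

theorem neg_of_tendsto_of_hasDerivAt_neg {f : ℝ → ℝ} {a l : ℝ} (hf : ContinuousOn f (Ioi a))
    (hl : Tendsto f (𝓝[>] a) (𝓝 l)) (hl0 : l ≤ 0)
    (hderiv : ∀ t > a, 0 ≤ f t → ∃ f' < 0, HasDerivAt f f' t) {t : ℝ} (ht : a < t) :
    f t < 0 := by
  by_contra! hft
  obtain ⟨f', hf'0, hf'⟩ := hderiv t ht hft
  obtain ⟨s, hs, hts⟩ := exists_lt_of_hasDerivAt_neg hf' hf'0 ht
  obtain ⟨b, hfb, hb⟩ :=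
    ((hl.eventually (gt_mem_nhds (by linarith : l < f s))).and (Ioo_mem_nhdsGT hs.1)).exists
  exact (lt_of_hasDerivAt_neg_of_le (hf.mono (Ici_subset_Ioi.2 hb.1)) hfb
    (fun x hx hsx => hderiv x (hb.1.trans hx) (by linarith)) hb.2.le).false

theorem exists_neg_of_deriv_le_neg {f : ℝ → ℝ} {T c : ℝ} (hc : 0 < c)
    (hf : ContinuousOn f (Ici T)) (hfd : DifferentiableOn ℝ f (Ioi T))
    (hder : ∀ t > T, deriv f t ≤ -c) : ∃ t ≥ T, f t < 0 := by
  have hTt : T ≤ T + |f T| / c + 1 := by have := div_nonneg (abs_nonneg (f T)) hc.le; linarith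
  refine ⟨_, hTt, ?_⟩
  have hmvt := (convex_Ici T).image_sub_le_mul_sub_of_deriv_le hf (by rwa [interior_Ici])
    (by rwa [interior_Ici]) T self_mem_Ici _ hTt hTt
  have : c * (|f T| / c) = |f T| := mul_div_cancel₀ _ hc.ne'
  nlinarith [le_abs_self (f T)]

theorem StrictMono.exists_pos_forall_le_neg {φ : ℝ → ℝ} (hφ : StrictMono φ)
    (hφc : ContinuousAt φ 0) (hφ0 : φ 0 = 0) {g : ℝ} (hg : g < 0) :
    ∃ c > 0, ∀ v, φ v ≤ g → v ≤ -c := by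
  have hnear : ∀ᶠ x in 𝓝[<] (0:ℝ), g < φ x :=
    (hφc.eventually (lt_mem_nhds (hφ0.symm ▸ hg : g < φ 0))).filter_mono nhdsWithin_le_nhds
  obtain ⟨x, hgx, hx⟩ := (hnear.and self_mem_nhdsWithin).exists
  refine ⟨-x, neg_pos.2 hx, fun v hv => ?_⟩
  by_contra! h
  rw [neg_neg] at h
  exact (hv.trans_lt hgx).not_gt (hφ h)

theorem tendsto_atTop_zero_of_antitoneOn {f : ℝ → ℝ} (hf : AntitoneOn f (Ioi 0))
    (hpos : ∀ t > 0, 0 < f t) (hlt : ∀ L > 0, ∃ t > 0, f t < L) :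
    Tendsto f atTop (𝓝 0) := by
  refine tendsto_order.2 ⟨fun a ha => ?_, fun L hL => ?_⟩
  · filter_upwards [eventually_gt_atTop 0] with t ht using ha.trans (hpos t ht)
  · obtain ⟨t₀, ht₀, hft₀⟩ := hlt L hL
    filter_upwards [eventually_ge_atTop t₀] with t ht
    exact (hf ht₀ (ht₀.trans_le ht) ht).trans_lt hft₀

structure IsPositiveRadialSolution (φ : ℝ → ℝ) (n α q : ℝ) (w : ℝ → ℝ) : Prop where
  contDiffOn : ContDiffOn ℝ 1 w (Ici 0)
  ode : ∀ t > (0:ℝ), deriv (fun s => φ (deriv w s)) t + ((n - 1) / t) * φ (deriv w t)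
    + t ^ α * (w t) ^ q = 0
  pos : ∀ t ≥ (0:ℝ), 0 < w t

noncomputable def radialFlux (φ : ℝ → ℝ) (n : ℝ) (w : ℝ → ℝ) (t : ℝ) : ℝ :=
  t ^ (n - 1) * φ (deriv w t)

theorem radialFlux_neg_iff {φ w : ℝ → ℝ} {n t : ℝ} (hφ : StrictMono φ) (hφ0 : φ 0 = 0)
    (ht : 0 < t) : radialFlux φ n w t < 0 ↔ deriv w t < 0 := by
  have hsign := hφ.lt_iff_lt (a := deriv w t) (b := 0)
  rw [hφ0] at hsign
  rw [radialFlux, ← hsign]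
  exact ⟨fun h => neg_of_mul_neg_right h (rpow_pos_of_pos ht _).le,
    mul_neg_of_pos_of_neg (rpow_pos_of_pos ht _)⟩

namespace IsPositiveRadialSolution

variable {φ w : ℝ → ℝ} {n α q : ℝ}

theorem continuousOn (hw : IsPositiveRadialSolution φ n α q w) : ContinuousOn w (Ici 0) :=
  hw.contDiffOn.continuousOn

theorem differentiableAt (hw : IsPositiveRadialSolution φ n α q w) {t : ℝ} (ht : 0 < t) :
    DifferentiableAt ℝ w t :=
  (hw.contDiffOn.differentiableOn one_ne_zero t ht.le).differentiableAt (Ici_mem_nhds ht)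

theorem continuousOn_radialFlux (hw : IsPositiveRadialSolution φ n α q w) (hφ : Continuous φ) :
    ContinuousOn (radialFlux φ n w) (Ioi 0) :=
  (continuousOn_id.rpow_const fun _ ht => Or.inl (ne_of_gt ht)).mul <| hφ.comp_continuousOn <|
    (hw.contDiffOn.mono Ioi_subset_Ici_self).continuousOn_deriv_of_isOpen isOpen_Ioi le_rfl

/-- `deriv` is `0` where `φ ∘ w'` is not differentiable, and there the equation degenerates to
`(n - 1) / t * φ (w' t) = -t ^ α * w t ^ q`. -/
theorem hasDerivAt_radialFlux_or (hw : IsPositiveRadialSolution φ n α q w) {t : ℝ} (ht : 0 < t) :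
    HasDerivAt (radialFlux φ n w) (-(t ^ (n + α - 1) * w t ^ q)) t ∨
      (n - 1) * radialFlux φ n w t = -(t ^ (n + α) * w t ^ q) := by
  have hode := hw.ode t ht
  have hpow : t ^ (n + α - 1) = t ^ (n - 1) * t ^ α := by
    rw [← rpow_add ht]; ring_nf
  by_cases hd : DifferentiableAt ℝ (fun s => φ (deriv w s)) t
  · left
    refine ((hasDerivAt_rpow_const (p := n - 1) (Or.inl ht.ne')).mul hd.hasDerivAt).congr_deriv ?_
    rw [rpow_sub_one ht.ne' (n - 1), hpow]
    linear_combination t ^ (n - 1) * hode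
  · right
    rw [deriv_zero_of_not_differentiableAt hd, zero_add] at hode
    rw [radialFlux, ← sub_add_cancel (n + α) 1, rpow_add_one ht.ne', hpow]
    have ht' : t / t = 1 := div_self ht.ne'
    linear_combination t ^ (n - 1) * t * hode - (n - 1) * t ^ (n - 1) * φ (deriv w t) * ht'

theorem tendsto_radialFlux (hw : IsPositiveRadialSolution φ n α q w) (hφ : Continuous φ)
    (hn : 1 < n) : Tendsto (radialFlux φ n w) (𝓝[>] 0) (𝓝 0) := by
  have hderiv : ContinuousWithinAt (derivWithin w (Ici 0)) (Ici 0) 0 :=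
    hw.contDiffOn.continuousOn_derivWithin (uniqueDiffOn_Ici 0) le_rfl 0 self_mem_Ici
  have hpow : Tendsto (fun t : ℝ => t ^ (n - 1)) (𝓝[>] 0) (𝓝 0) := by
    simpa [zero_rpow (by linarith : n - 1 ≠ 0)] using
      ((continuousAt_rpow_const 0 (n - 1) (Or.inr (by linarith))).tendsto).mono_left
        nhdsWithin_le_nhds
  have hlim := hpow.mul (hφ.continuousAt.tendsto.comp
    (hderiv.tendsto.mono_left (nhdsWithin_mono _ Ioi_subset_Ici_self)))
  rw [zero_mul] at hlim
  refine hlim.congr' ?_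
  filter_upwards [self_mem_nhdsWithin] with t (ht : 0 < t)
  simp only [radialFlux, Function.comp_apply, derivWithin_of_mem_nhds (Ici_mem_nhds ht)]

theorem exists_lt_comp_deriv (hw : IsPositiveRadialSolution φ n α q w) (hφ : StrictMono φ)
    (hφc : ContinuousAt φ 0) (hφ0 : φ 0 = 0) {g : ℝ} (hg : g < 0) (T : ℝ) :
    ∃ t ≥ T, g < φ (deriv w t) := by
  by_contra! hle
  obtain ⟨c, hc, hbound⟩ := hφ.exists_pos_forall_le_neg hφc hφ0 hg
  have hT : 0 ≤ max T 0 := le_max_right T 0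
  obtain ⟨t, ht, hneg⟩ := exists_neg_of_deriv_le_neg hc
    (hw.continuousOn.mono (Ici_subset_Ici.2 hT))
    (fun t ht => (hw.differentiableAt (hT.trans_lt ht)).differentiableWithinAt)
    (fun t ht => hbound _ (hle t ((le_max_left T 0).trans ht.le)))
  exact hneg.not_ge (hw.pos t (hT.trans ht)).le

theorem radialFlux_neg (hw : IsPositiveRadialSolution φ n α q w) (hφ : Continuous φ)
    (hn : 1 < n) {t : ℝ} (ht : 0 < t) : radialFlux φ n w t < 0 := by
  refine neg_of_tendsto_of_hasDerivAt_neg (hw.continuousOn_radialFlux hφ)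
    (hw.tendsto_radialFlux hφ hn) le_rfl (fun s hs hflux => ?_) ht
  have hsource : 0 < s ^ (n + α - 1) * w s ^ q :=
    mul_pos (rpow_pos_of_pos hs _) (rpow_pos_of_pos (hw.pos s hs.le) _)
  rcases hw.hasDerivAt_radialFlux_or hs with hd | hdeg
  · exact ⟨_, neg_neg_of_pos hsource, hd⟩
  · have : 0 < s ^ (n + α) * w s ^ q :=
      mul_pos (rpow_pos_of_pos hs _) (rpow_pos_of_pos (hw.pos s hs.le) _)
    nlinarith

theorem radialFlux_add_neg (hw : IsPositiveRadialSolution φ n α q w) (hφ : Continuous φ)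
    (hn : 1 ≤ n) {m c : ℝ} (hc : 0 < c) (hcn : c * (n - 1) < m) (hcα : c * (n + α) < m)
    (hm : ∀ t ≥ 1, m ≤ w t ^ q) (h1 : radialFlux φ n w 1 < 0) {t : ℝ} (ht : 1 ≤ t) :
    radialFlux φ n w t + c * (t ^ (n + α) - 1) < 0 := by
  refine lt_of_hasDerivAt_neg_of_le (f := fun t => radialFlux φ n w t + c * (t ^ (n + α) - 1))
    (((hw.continuousOn_radialFlux hφ).mono (Ici_subset_Ioi.2 zero_lt_one)).fun_add ?_)
    (by simpa using h1) (fun s hs hψ => ?_) ht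
  · exact continuousOn_const.mul ((continuousOn_id.rpow_const fun s hs =>
      Or.inl (zero_lt_one.trans_le hs).ne').sub continuousOn_const)
  have hs0 : 0 < s := zero_lt_one.trans hs
  have hP : 0 < s ^ (n + α) := rpow_pos_of_pos hs0 _
  have hmw := hm s hs.le
  rcases hw.hasDerivAt_radialFlux_or hs0 with hd | hdeg
  · refine ⟨_, ?_, hd.add (((hasDerivAt_rpow_const (Or.inl hs0.ne')).sub_const 1).const_mul c)⟩
    have := rpow_pos_of_pos hs0 (n + α - 1)
    nlinarith
  · exfalso
    have := mul_nonneg (sub_nonneg.2 hn) hψ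
    nlinarith

theorem exists_lt (hw : IsPositiveRadialSolution φ n α q w) (hφ : StrictMono φ)
    (hφc : Continuous φ) (hφ0 : φ 0 = 0) (hn : 1 ≤ n) (hα : 0 ≤ α) (hq : 0 ≤ q)
    (h1 : radialFlux φ n w 1 < 0) {L : ℝ} (hL : 0 < L) : ∃ t > 0, w t < L := by
  by_contra! hwL
  have hm : 0 < L ^ q := rpow_pos_of_pos hL q
  set c := L ^ q / (2 * n + α)
  have hc : 0 < c := div_pos hm (by linarith)
  have hcn : c * (n - 1) < L ^ q := by
    rw [div_mul_eq_mul_div, div_lt_iff₀ (by linarith)]; nlinarith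
  have hcα : c * (n + α) < L ^ q := by
    rw [div_mul_eq_mul_div, div_lt_iff₀ (by linarith)]; nlinarith
  obtain ⟨t, ht, hlt⟩ := hw.exists_lt_comp_deriv hφ hφc.continuousAt hφ0 (neg_lt_zero.2 hc) 2
  have hflux := hw.radialFlux_add_neg hφc hn hc hcn hcα
    (fun s hs => rpow_le_rpow hL.le (hwL s (by linarith)) hq) h1 (by linarith : (1:ℝ) ≤ t)
  have ht0 : 0 < t := by linarith
  have hgrowth : t ^ (n - 1) ≤ t ^ (n + α) - 1 := by
    have hsplit : t ^ (n + α) = t ^ (n - 1) * t ^ (1 + α) := by rw [← rpow_add ht0]; ring_nf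
    have hle : t ≤ t ^ (1 + α) := by
      simpa using rpow_le_rpow_of_exponent_le (by linarith : (1:ℝ) ≤ t) (by linarith : 1 ≤ 1 + α)
    have hone : 1 ≤ t ^ (n - 1) := one_le_rpow (by linarith) (by linarith)
    nlinarith
  have hpow : 0 < t ^ (n - 1) := rpow_pos_of_pos ht0 _
  have : t ^ (n - 1) * φ (deriv w t) < t ^ (n - 1) * -c := by
    unfold radialFlux at hflux; nlinarith
  exact hlt.not_ge (lt_of_mul_lt_mul_left this hpow.le).le

end IsPositiveRadialSolution

theorem not_isPositiveRadialSolution_one {φ w : ℝ → ℝ} {α q : ℝ} (hφ : StrictMono φ)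
    (hφc : Continuous φ) (hφ0 : φ 0 = 0) (hα : 0 ≤ α) (hq : 0 ≤ q) :
    ¬ IsPositiveRadialSolution φ 1 α q w := by
  intro hw
  set G := fun s => φ (deriv w s)
  have hflux : radialFlux φ 1 w = G := by ext; simp [radialFlux, G]
  have hG : ∀ t > 0, HasDerivAt G (-(t ^ α * w t ^ q)) t := by
    intro t ht
    have hsource : 0 < t ^ (1 + α) * w t ^ q :=
      mul_pos (rpow_pos_of_pos ht _) (rpow_pos_of_pos (hw.pos t ht.le) _)
    rcases hw.hasDerivAt_radialFlux_or ht with hd | hdeg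
    · simpa [hflux] using hd
    · simp only [sub_self, zero_mul] at hdeg; linarith
  have hanti : StrictAntiOn G (Ioi 0) := by
    refine strictAntiOn_of_hasDerivWithinAt_neg (convex_Ioi 0)
      (fun t ht => (hG t ht).continuousAt.continuousWithinAt)
      (fun t ht => (hG t (by simpa using ht)).hasDerivWithinAt) fun t ht => ?_
    have ht : 0 < t := by simpa using ht
    exact neg_neg_of_pos (mul_pos (rpow_pos_of_pos ht _) (rpow_pos_of_pos (hw.pos t ht.le) _))
  by_cases hsign : ∃ T > 0, G T < 0
  · obtain ⟨T, hT, hGT⟩ := hsign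
    obtain ⟨t, ht, hlt⟩ := hw.exists_lt_comp_deriv hφ hφc.continuousAt hφ0 hGT T
    exact hlt.not_ge (hanti.antitoneOn hT (hT.trans_le ht) ht)
  push Not at hsign
  have hmono : MonotoneOn w (Ici 0) := by
    refine monotoneOn_of_deriv_nonneg (convex_Ici 0) hw.continuousOn ?_ ?_ <;> rw [interior_Ici]
    · exact fun t ht => (hw.differentiableAt ht).differentiableWithinAt
    · intro t ht
      have := hsign t ht
      rwa [← hφ0, hφ.le_iff_le] at this
  obtain ⟨t, ht, hneg⟩ := exists_neg_of_deriv_le_neg (T := 1) (f := G)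
    (rpow_pos_of_pos (hw.pos 0 le_rfl) q)
    (fun t ht => (hG t (zero_lt_one.trans_le ht)).continuousAt.continuousWithinAt)
    (fun t ht => (hG t (zero_lt_one.trans ht)).differentiableAt.differentiableWithinAt)
    (fun t ht => by
      rw [(hG t (by linarith)).deriv, neg_le_neg_iff]
      have h1 : 1 ≤ t ^ α := one_le_rpow ht.le hα
      have h2 : w 0 ^ q ≤ w t ^ q := rpow_le_rpow (hw.pos 0 le_rfl).le
        (hmono self_mem_Ici (mem_Ici.2 (by linarith)) (by linarith)) hq
      nlinarith [rpow_pos_of_pos (hw.pos 0 le_rfl) q])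
  exact hneg.not_ge (hsign t (by linarith))

theorem stmt_5_general (p q α n : ℝ) (hp : 1 < p) (hq : 1 < q) (hα : 0 ≤ α) (hn : 1 ≤ n)
    (φ : ℝ → ℝ) (hφ : ∀ v, φ v = v * |v| ^ (p - 2))
    (w : ℝ → ℝ) (hw : ContDiffOn ℝ 1 w (Ici 0))
    (hode : ∀ t > (0:ℝ),
      deriv (fun s => φ (deriv w s)) t + ((n - 1) / t) * φ (deriv w t)
        + t ^ α * (w t) ^ q = 0)
    (hpos : ∀ t ≥ (0:ℝ), 0 < w t) :
    StrictAntiOn w (Ioi 0) ∧ Tendsto w atTop (nhds 0) := by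
  have hφ' : φ = fun v => v * |v| ^ (p - 2) := funext hφ
  have hφm : StrictMono φ := hφ' ▸ strictMono_mul_abs_rpow_sub_two hp
  have hφc : Continuous φ := hφ' ▸ continuous_mul_abs_rpow_sub_two hp
  have hφ0 : φ 0 = 0 := by simp [hφ]
  have hsol : IsPositiveRadialSolution φ n α q w := ⟨hw, hode, hpos⟩
  have hflux : ∀ t > 0, radialFlux φ n w t < 0 := by
    rcases hn.eq_or_lt with rfl | hn
    · exact (not_isPositiveRadialSolution_one hφm hφc hφ0 hα (by linarith) hsol).elim
    · exact fun t => hsol.radialFlux_neg hφc hn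
  have hanti : StrictAntiOn w (Ioi 0) :=
    strictAntiOn_of_deriv_neg (convex_Ioi 0) (hsol.continuousOn.mono Ioi_subset_Ici_self)
      fun t ht => (radialFlux_neg_iff hφm hφ0 (by simpa using ht)).1 (hflux t (by simpa using ht))
  exact ⟨hanti, tendsto_atTop_zero_of_antitoneOn hanti.antitoneOn (fun t ht => hpos t ht.le)
    fun L hL => hsol.exists_lt hφm hφc hφ0 hn hα (by linarith) (hflux 1 one_pos) hL⟩

/-- A globally positive solution of `(φ(w'))' + ((n−1)/t)φ(w') + t^α w^q = 0`
with `w(0)=1`, `w'(0)=0` is strictly decreasing on `(0,∞)` and tends to `0`. -/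
theorem stmt_5 (p q α n : ℝ) (hp : 1 < p) (hq : 1 < q) (hα : 0 ≤ α) (hn : 1 ≤ n)
    (φ : ℝ → ℝ) (hφ : ∀ v, φ v = v * |v| ^ (p - 2))
    (w : ℝ → ℝ) (hw : ContDiffOn ℝ 1 w (Ici 0))
    (hode : ∀ t > (0:ℝ),
      deriv (fun s => φ (deriv w s)) t + ((n - 1) / t) * φ (deriv w t)
        + t ^ α * (w t) ^ q = 0)
    (hw0 : w 0 = 1) (hw0' : deriv w 0 = 0)
    (hpos : ∀ t ≥ (0:ℝ), 0 < w t) :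
    StrictAntiOn w (Ioi 0) ∧ Tendsto w atTop (nhds 0) :=
  stmt_5_general p q α n hp hq hα hn φ hφ w hw hode hpos
end
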